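/- arXiv:2105.08934 — 2 statements merged into one kernel-verified Lean document; each statement's English description precedes it below -/
import Mathlib

section
/- Let A ∈ ℂ^{n×n} admit a Hermitian positive definite X with A*X + XA ≤ 0. Then every purely imaginary eigenvalue λ of A (Re λ = 0) is semi-simple in the sense that ker(A − λI)² = ker(A − λI). -/
open Matrix

theorem lyapunov_imaginary_eigenvalue_semisimple {n : ℕ} (A X : Matrix (Fin n) (Fin n) ℂ)
    (hXherm : Xᴴ = X)
    (hXpos : ∀ z : Fin n → ℂ, z ≠ 0 → 0 < ((star z) ⬝ᵥ X.mulVec z).re)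
    (hlyap : ∀ z : Fin n → ℂ, ((star z) ⬝ᵥ (Aᴴ * X + X * A).mulVec z).re ≤ 0)
    (lam : ℂ) (hlam : lam.re = 0) :
    ∀ v : Fin n → ℂ, (A - lam • (1 : Matrix (Fin n) (Fin n) ℂ)).mulVec
      ((A - lam • (1 : Matrix (Fin n) (Fin n) ℂ)).mulVec v) = 0 →
      (A - lam • (1 : Matrix (Fin n) (Fin n) ℂ)).mulVec v = 0 := by
  intro v hv
  set B : Matrix (Fin n) (Fin n) ℂ := A - lam • (1 : Matrix (Fin n) (Fin n) ℂ) with hB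
  set w : Fin n → ℂ := B.mulVec v with hwdef
  by_contra hw
  have hc : 0 < ((star w) ⬝ᵥ X.mulVec w).re := hXpos w hw
  set c : ℝ := ((star w) ⬝ᵥ X.mulVec w).re with hcdef
  set b : ℝ := ((star w) ⬝ᵥ X.mulVec v).re with hbdef
  set t : ℝ := (|b| + 1) / c with htdef
  set z : Fin n → ℂ := v + (t : ℂ) • w with hzdef
  -- λ̄ + λ = 0
  have hstar : star lam = -lam := by
    rw [Complex.star_def]
    apply Complex.ext <;> simp [hlam]
  -- the Lyapunov matrix equals Bᴴ*X + X*B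
  have hM : Aᴴ * X + X * A = Bᴴ * X + X * B := by
    rw [hB]
    simp only [Matrix.conjTranspose_sub, Matrix.conjTranspose_smul, Matrix.conjTranspose_one,
      Matrix.sub_mul, Matrix.mul_sub, Matrix.smul_mul, Matrix.mul_smul, Matrix.one_mul,
      Matrix.mul_one, hstar]
    module
  -- B z = w
  have hBw : B.mulVec w = 0 := hv
  have hBz : B.mulVec z = w := by
    rw [hzdef, Matrix.mulVec_add, Matrix.mulVec_smul, hBw, ← hwdef]
    simp
  -- the quadratic form at z
  have key : (star z) ⬝ᵥ (Aᴴ * X + X * A).mulVec z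
      = (star w) ⬝ᵥ X.mulVec z + star ((star w) ⬝ᵥ X.mulVec z) := by
    rw [hM, Matrix.add_mulVec, dotProduct_add]
    have h1 : (star z) ⬝ᵥ (Bᴴ * X).mulVec z = (star w) ⬝ᵥ X.mulVec z := by
      rw [← Matrix.mulVec_mulVec, Matrix.dotProduct_mulVec, ← Matrix.star_mulVec, hBz]
    have h2 : (star z) ⬝ᵥ (X * B).mulVec z = star ((star w) ⬝ᵥ X.mulVec z) := by
      rw [← star_star ((star z) ⬝ᵥ (X * B).mulVec z)]
      congr 1
      rw [← Matrix.mulVec_mulVec, hBz, star_dotProduct, star_star, Matrix.star_mulVec, hXherm,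
        ← Matrix.dotProduct_mulVec]
    rw [h1, h2]
  have hre : ((star z) ⬝ᵥ (Aᴴ * X + X * A).mulVec z).re
      = 2 * ((star w) ⬝ᵥ X.mulVec z).re := by
    rw [key]
    simp [Complex.add_re, Complex.conj_re]
    ring
  have hzre : ((star w) ⬝ᵥ X.mulVec z).re = b + t * c := by
    rw [hzdef, Matrix.mulVec_add, dotProduct_add, Matrix.mulVec_smul, dotProduct_smul]
    simp [hbdef, hcdef, Complex.add_re, Complex.ofReal_re]
  have htc : t * c = |b| + 1 := by
    rw [htdef]
    field_simp
  have hb : -b ≤ |b| := neg_le_abs b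
  have := hlyap z
  rw [hre, hzre, htc] at this
  linarith
end

section
/- Let A₀ ∈ ℂ^{n×n} have all eigenvalues with Re λ ≤ 0 and all purely imaginary eigenvalues semi-simple (ker(A₀ − λI)² = ker(A₀ − λI) for Re λ = 0). Then there exists a Hermitian positive definite matrix X with A₀*X + XA₀ ≤ 0 (negative semidefinite). -/
open Matrix Complex Finset

namespace CL

variable {n : ℕ}

lemma key_adj (M G : Matrix (Fin n) (Fin n) ℂ) (x y : Fin n → ℂ) :
    star x ⬝ᵥ (Mᴴ * G).mulVec y = star (M.mulVec x) ⬝ᵥ G.mulVec y := by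
  rw [← Matrix.mulVec_mulVec, Matrix.dotProduct_mulVec, ← Matrix.star_mulVec]


lemma star_quad (M : Matrix (Fin n) (Fin n) ℂ) (z : Fin n → ℂ) :
    star z ⬝ᵥ Mᴴ.mulVec z = star (star z ⬝ᵥ M.mulVec z) := by
  simp only [dotProduct, mulVec, Matrix.conjTranspose_apply, star_sum, star_mul', star_star,
    Pi.star_apply, Finset.mul_sum]
  rw [Finset.sum_comm]
  apply Finset.sum_congr rfl; intro i _
  apply Finset.sum_congr rfl; intro j _
  ring

lemma dot_self_eq (w : Fin n → ℂ) : star w ⬝ᵥ w = ((∑ i, Complex.normSq (w i) : ℝ) : ℂ) := by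
  simp [dotProduct, Complex.mul_conj', mul_comm, Complex.normSq_eq_norm_sq]

lemma dot_self_re_nonneg (w : Fin n → ℂ) : 0 ≤ (star w ⬝ᵥ w).re := by
  rw [dot_self_eq, Complex.ofReal_re]
  exact Finset.sum_nonneg fun i _ => Complex.normSq_nonneg _


lemma dot_self_re_pos {w : Fin n → ℂ} (hw : w ≠ 0) : 0 < (star w ⬝ᵥ w).re := by
  rw [dot_self_eq, Complex.ofReal_re]
  obtain ⟨i, hi⟩ := Function.ne_iff.mp hw
  exact Finset.sum_pos' (fun j _ => Complex.normSq_nonneg _)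
    ⟨i, Finset.mem_univ i, Complex.normSq_pos.mpr hi⟩

lemma sum_mulVec' {ι : Type*} (s : Finset ι) (f : ι → Matrix (Fin n) (Fin n) ℂ) (x : Fin n → ℂ) :
    (∑ i ∈ s, f i).mulVec x = ∑ i ∈ s, (f i).mulVec x := by
  ext j
  simp only [mulVec, dotProduct, Matrix.sum_apply, Finset.sum_apply, Finset.sum_mul]
  exact Finset.sum_comm

lemma cauchy (a b : Fin n → ℂ) :
    (star a ⬝ᵥ b).re ≤ Real.sqrt ((star a ⬝ᵥ a).re) * Real.sqrt ((star b ⬝ᵥ b).re) := by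
  let a' : EuclideanSpace ℂ (Fin n) := WithLp.toLp 2 a
  let b' : EuclideanSpace ℂ (Fin n) := WithLp.toLp 2 b
  have hip : ∀ u v : EuclideanSpace ℂ (Fin n), (inner ℂ u v : ℂ) = star (u : Fin n → ℂ) ⬝ᵥ v := by
    intro u v
    simp [PiLp.inner_apply, RCLike.inner_apply, dotProduct, mul_comm]
  have hn : ∀ u : EuclideanSpace ℂ (Fin n), Real.sqrt ((star (u : Fin n → ℂ) ⬝ᵥ u).re) = ‖u‖ := by
    intro u
    rw [← hip u u, show ((inner ℂ u u : ℂ)).re = ‖u‖ ^ 2 from by simpa using inner_self_eq_norm_sq (𝕜 := ℂ) u,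
      Real.sqrt_sq (norm_nonneg u)]
  show (star a'.ofLp ⬝ᵥ b'.ofLp).re ≤ Real.sqrt ((star a'.ofLp ⬝ᵥ a'.ofLp).re) * Real.sqrt ((star b'.ofLp ⬝ᵥ b'.ofLp).re)
  rw [hn a', hn b', ← hip a' b']
  exact (Complex.re_le_norm _).trans ((le_of_eq rfl).trans
    (norm_inner_le_norm a' b'))


lemma amgm {r c' α β : ℝ} (hr : 0 < r) (hc' : 0 ≤ c') :
    (c' * r * r) * (α * β) ≤ r/2 * ((c' * r * r) * α^2) + r/2 * (c' * β^2) := by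
  nlinarith [mul_nonneg (mul_nonneg hc' hr.le) (sq_nonneg (r * α - β)), hr]

lemma dotProduct_sum' {ι : Type*} (v : Fin n → ℂ) (s : Finset ι) (f : ι → (Fin n → ℂ)) :
    v ⬝ᵥ (∑ i ∈ s, f i) = ∑ i ∈ s, v ⬝ᵥ f i := by
  simp only [dotProduct, Finset.sum_apply, Finset.mul_sum]
  exact Finset.sum_comm

section

variable (N : Matrix (Fin n) (Fin n) ℂ) (r : ℝ)

noncomputable def Hmat : Matrix (Fin n) (Fin n) ℂ :=
  ∑ k ∈ Finset.range (n+1), (((r⁻¹ ^ (2*k) : ℝ)) : ℂ) • ((N ^ k)ᴴ * N ^ k)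

lemma Hmat_herm : (Hmat N r)ᴴ = Hmat N r := by
  unfold Hmat
  rw [Matrix.conjTranspose_sum]
  refine Finset.sum_congr rfl fun k _ => ?_
  rw [Matrix.conjTranspose_smul, Matrix.conjTranspose_mul, Matrix.conjTranspose_conjTranspose]
  congr 1
  exact Complex.conj_ofReal _

lemma Hmat_expand (G : Matrix (Fin n) (Fin n) ℂ) (x : Fin n → ℂ) :
    star x ⬝ᵥ ((Hmat N r) * G).mulVec x
      = ∑ k ∈ Finset.range (n+1),
          (((r⁻¹ ^ (2*k) : ℝ)) : ℂ) * (star ((N ^ k).mulVec x) ⬝ᵥ (N ^ k * G).mulVec x) := by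
  unfold Hmat
  rw [Finset.sum_mul, sum_mulVec', dotProduct_sum']
  refine Finset.sum_congr rfl fun k _ => ?_
  rw [Matrix.smul_mul, Matrix.smul_mulVec, dotProduct_smul, smul_eq_mul, mul_assoc,
    key_adj]

lemma Hmat_lower (z : Fin n → ℂ) :
    (star z ⬝ᵥ z).re ≤ (star z ⬝ᵥ (Hmat N r).mulVec z).re := by
  have h := Hmat_expand N r 1 z
  rw [Matrix.mul_one] at h
  rw [h, Complex.re_sum]
  have h0 : ∀ k, ((((r⁻¹ ^ (2*k) : ℝ)) : ℂ) * (star ((N ^ k).mulVec z) ⬝ᵥ (N ^ k * 1).mulVec z)).re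
      = r⁻¹ ^ (2*k) * (star ((N ^ k).mulVec z) ⬝ᵥ (N ^ k).mulVec z).re := by
    intro k
    rw [Matrix.mul_one, Complex.re_ofReal_mul]
  simp only [h0]
  rw [Finset.sum_range_succ']
  have h1 : ∀ k, 0 ≤ r⁻¹ ^ (2*(k+1)) * (star ((N ^ (k+1)).mulVec z) ⬝ᵥ (N ^ (k+1)).mulVec z).re :=
    fun k => mul_nonneg (Even.pow_nonneg ⟨k+1, by ring⟩ _) (dot_self_re_nonneg _)
  have h2 : r⁻¹ ^ (2*0) * (star ((N ^ 0).mulVec z) ⬝ᵥ (N ^ 0).mulVec z).re = (star z ⬝ᵥ z).re := by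
    simp [Matrix.one_mulVec]
  rw [h2]
  exact le_add_of_nonneg_left (Finset.sum_nonneg fun k _ => h1 k)

end

section
variable (N : Matrix (Fin n) (Fin n) ℂ) (r : ℝ)

lemma block_est (hr : 0 < r) (x : Fin n → ℂ) (hx : (N ^ n).mulVec x = 0) :
    (star x ⬝ᵥ ((Hmat N r) * N).mulVec x).re ≤ r * (star x ⬝ᵥ (Hmat N r).mulVec x).re := by
  have hQ := Hmat_expand N r 1 x
  rw [Matrix.mul_one] at hQ
  have hE := Hmat_expand N r N x
  set c : ℕ → ℝ := fun k => r⁻¹ ^ (2*k) with hc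
  set v : ℕ → (Fin n → ℂ) := fun k => (N ^ k).mulVec x with hv
  set q : ℕ → ℝ := fun k => (star (v k) ⬝ᵥ (v k)).re with hqdef
  have hvsucc : ∀ k, (N ^ k * N).mulVec x = v (k+1) := fun k => by rw [hv, ← pow_succ]
  have hqnn : ∀ k, 0 ≤ q k := fun k => dot_self_re_nonneg _
  have hvlast : v (n+1) = 0 := by
    show (N ^ (n+1)).mulVec x = 0
    rw [pow_succ', ← Matrix.mulVec_mulVec, hx, Matrix.mulVec_zero]
  have hqlast : q (n+1) = 0 := by
    show (star (v (n+1)) ⬝ᵥ v (n+1)).re = 0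
    rw [hvlast]; simp
  have hck : ∀ k, c (k+1) * r * r = c k := by
    intro k
    show r⁻¹ ^ (2*(k+1)) * r * r = r⁻¹ ^ (2*k)
    have h2 : 2*(k+1) = 2*k + 1 + 1 := by ring
    rw [h2, pow_succ, pow_succ]
    field_simp
  have hcnn : ∀ k, 0 ≤ c k := fun k => Even.pow_nonneg ⟨k, by ring⟩ _
  have key : ∀ k, c k * (star (v k) ⬝ᵥ v (k+1)).re
      ≤ r/2 * (c k * q k) + r/2 * (c (k+1) * q (k+1)) := by
    intro k
    have cs := cauchy (v k) (v (k+1))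
    have am := amgm (r := r) (c' := c (k+1)) (α := Real.sqrt (q k)) (β := Real.sqrt (q (k+1)))
      hr (hcnn (k+1))
    rw [hck k] at am
    calc c k * (star (v k) ⬝ᵥ v (k+1)).re
        ≤ c k * (Real.sqrt (q k) * Real.sqrt (q (k+1))) :=
          mul_le_mul_of_nonneg_left cs (hcnn k)
      _ ≤ r/2 * (c k * (Real.sqrt (q k))^2) + r/2 * (c (k+1) * (Real.sqrt (q (k+1)))^2) := am
      _ = r/2 * (c k * q k) + r/2 * (c (k+1) * q (k+1)) := by
          rw [Real.sq_sqrt (hqnn k), Real.sq_sqrt (hqnn (k+1))]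
  have hQs : (star x ⬝ᵥ (Hmat N r).mulVec x).re = ∑ k ∈ Finset.range (n+1), c k * q k := by
    rw [hQ, Complex.re_sum]
    exact Finset.sum_congr rfl fun k _ => by rw [Matrix.mul_one, Complex.re_ofReal_mul]
  have hshift : ∑ k ∈ Finset.range (n+1), c (k+1) * q (k+1)
      ≤ ∑ k ∈ Finset.range (n+1), c k * q k := by
    have h1 := Finset.sum_range_succ' (fun k => c k * q k) (n+1)
    have h2 := Finset.sum_range_succ (fun k => c k * q k) (n+1)
    have h3 : 0 ≤ c 0 * q 0 := mul_nonneg (hcnn 0) (hqnn 0)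
    rw [hqlast] at h2
    simp only [mul_zero] at h2
    linarith [h1, h2]
  calc (star x ⬝ᵥ ((Hmat N r) * N).mulVec x).re
      = ∑ k ∈ Finset.range (n+1), c k * (star (v k) ⬝ᵥ v (k+1)).re := by
        rw [hE, Complex.re_sum]
        exact Finset.sum_congr rfl fun k _ => by rw [hvsucc k, Complex.re_ofReal_mul]
    _ ≤ ∑ k ∈ Finset.range (n+1), (r/2 * (c k * q k) + r/2 * (c (k+1) * q (k+1))) :=
        Finset.sum_le_sum fun k _ => key k
    _ = r/2 * (∑ k ∈ Finset.range (n+1), c k * q k)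
        + r/2 * (∑ k ∈ Finset.range (n+1), c (k+1) * q (k+1)) := by
        rw [Finset.sum_add_distrib, Finset.mul_sum, Finset.mul_sum]
    _ ≤ r/2 * (∑ k ∈ Finset.range (n+1), c k * q k)
        + r/2 * (∑ k ∈ Finset.range (n+1), c k * q k) := by
        have := mul_le_mul_of_nonneg_left hshift (by linarith : (0:ℝ) ≤ r/2)
        linarith
    _ = r * (∑ k ∈ Finset.range (n+1), c k * q k) := by ring
    _ = r * (star x ⬝ᵥ (Hmat N r).mulVec x).re := by rw [hQs]
end

end CL

open Matrix

set_option maxHeartbeats 2000000 in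
theorem converse_lyapunov {n : ℕ} (A : Matrix (Fin n) (Fin n) ℂ)
    (hspec : ∀ (lam : ℂ) (x : Fin n → ℂ), x ≠ 0 → A.mulVec x = lam • x → lam.re ≤ 0)
    (hsemi : ∀ lam : ℂ, lam.re = 0 →
      ∀ v : Fin n → ℂ, (A - lam • (1 : Matrix (Fin n) (Fin n) ℂ)).mulVec
        ((A - lam • (1 : Matrix (Fin n) (Fin n) ℂ)).mulVec v) = 0 →
        (A - lam • (1 : Matrix (Fin n) (Fin n) ℂ)).mulVec v = 0) :
    ∃ X : Matrix (Fin n) (Fin n) ℂ, Xᴴ = X ∧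
      (∀ z : Fin n → ℂ, z ≠ 0 → 0 < ((star z) ⬝ᵥ X.mulVec z).re) ∧
      (∀ z : Fin n → ℂ, ((star z) ⬝ᵥ (Aᴴ * X + X * A).mulVec z).re ≤ 0) := by
  classical
  set f : Module.End ℂ (Fin n → ℂ) := Matrix.toLin' A with hf
  set t : ℂ → Submodule ℂ (Fin n → ℂ) := f.maxGenEigenspace with ht
  have hbridge : ∀ (μ : ℂ) (k : ℕ) (x : Fin n → ℂ),
      ((f - μ • 1) ^ k) x = ((A - μ • 1) ^ k).mulVec x := by
    intro μ k x
    have e1 : f - μ • (1 : Module.End ℂ (Fin n → ℂ))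
        = Matrix.toLinAlgEquiv' (A - μ • 1) := by
      rw [map_sub, _root_.map_smul, _root_.map_one,
        show Matrix.toLinAlgEquiv' A = (Matrix.toLin' A : Module.End ℂ (Fin n → ℂ)) from
          LinearMap.ext fun v => by rw [Matrix.toLinAlgEquiv'_apply, Matrix.toLin'_apply]]
    rw [e1, ← map_pow, Matrix.toLinAlgEquiv'_apply]
  have hkill : ∀ (μ : ℂ) (x : Fin n → ℂ), x ∈ t μ → ((A - μ • 1) ^ n).mulVec x = 0 := by
    intro μ x hx
    rw [ht, Module.End.maxGenEigenspace_eq_genEigenspace_finrank, Module.finrank_fin_fun] at hx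
    rw [← hbridge μ n x]
    exact Module.End.mem_genEigenspace_nat.mp hx
  have hsemi' : ∀ (μ : ℂ), μ.re = 0 → ∀ x ∈ t μ, (A - μ • 1).mulVec x = 0 := by
    intro μ hμ x hx
    have h1 : ((A - μ • 1) ^ n).mulVec x = 0 := hkill μ x hx
    suffices haux : ∀ (k : ℕ) (y : Fin n → ℂ),
        ((A - μ • 1) ^ k).mulVec y = 0 → (A - μ • 1).mulVec y = 0 from haux n x h1
    intro k
    induction k with
    | zero => intro y hy; rw [pow_zero, Matrix.one_mulVec] at hy; rw [hy, Matrix.mulVec_zero]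
    | succ k ih =>
        intro y hy
        rw [pow_succ, ← Matrix.mulVec_mulVec] at hy
        exact hsemi μ hμ y (ih _ hy)
  have hspec' : ∀ μ : ℂ, t μ ≠ ⊥ → μ.re ≤ 0 := by
    intro μ hbot
    have h1 : f.HasUnifEigenvalue μ ⊤ := by
      rw [ht] at hbot; exact hbot
    have h2 : f.HasEigenvalue μ := h1.lt zero_lt_one
    obtain ⟨v, hv⟩ := h2.exists_hasEigenvector
    have hv1 : A.mulVec v = μ • v := by
      have h3 := hv.apply_eq_smul
      rwa [hf, Matrix.toLin'_apply] at h3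
    exact hspec μ v hv.2 hv1
  have hTop : ⨆ μ, t μ = ⊤ := f.iSup_maxGenEigenspace_eq_top
  have hInd : iSupIndep t := f.independent_maxGenEigenspace
  set σ : Finset ℂ := (Module.End.finite_hasEigenvalue f).toFinset with hσdef
  have hσ : ∀ μ : ℂ, μ ∉ σ → t μ = ⊥ := by
    intro μ h
    by_contra hbot
    have h1 : f.HasUnifEigenvalue μ ⊤ := by
      rw [ht] at hbot; exact hbot
    exact h ((Set.Finite.mem_toFinset _).mpr (h1.lt zero_lt_one))
  have hcompl : ∀ μ : ℂ, IsCompl (t μ) (⨆ ν ∈ {ν : ℂ | ν ≠ μ}, t ν) := by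
    intro μ
    constructor
    · exact hInd.disjoint_biSup (by simp)
    · rw [codisjoint_iff, eq_top_iff, ← hTop]
      refine iSup_le fun ν => ?_
      rcases eq_or_ne ν μ with rfl | hne
      · exact le_sup_left
      · exact le_trans (le_biSup (s := {ν : ℂ | ν ≠ μ}) t (show ν ∈ {ν : ℂ | ν ≠ μ} from hne)) le_sup_right
  set Pl : ℂ → Module.End ℂ (Fin n → ℂ) := fun μ =>
    (t μ).subtype ∘ₗ ((t μ).projectionOnto _ (hcompl μ)) with hPl
  have hPlmem : ∀ μ z, Pl μ z ∈ t μ := fun μ z =>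
    ((t μ).projectionOnto _ (hcompl μ) z).2
  have hPl_left : ∀ μ z, z ∈ t μ → Pl μ z = z := by
    intro μ z hz
    have h1 := Submodule.projectionOnto_apply_left (hcompl μ) ⟨z, hz⟩
    show ((t μ).subtype) (((t μ).projectionOnto _ (hcompl μ)) z) = z
    rw [show ((t μ).projectionOnto _ (hcompl μ)) z
        = ((t μ).projectionOnto _ (hcompl μ)) (⟨z, hz⟩ : t μ) from rfl, h1]
    rfl
  have hPl_zero : ∀ μ ν z, ν ≠ μ → z ∈ t ν → Pl μ z = 0 := by
    intro μ ν z hν hz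
    have hzW : z ∈ ⨆ ν ∈ {ν : ℂ | ν ≠ μ}, t ν := le_biSup (s := {ν : ℂ | ν ≠ μ}) t (show ν ∈ {ν : ℂ | ν ≠ μ} from hν) hz
    have h1 := Submodule.projectionOnto_apply_of_mem_right (hcompl μ) hzW
    show ((t μ).subtype) (((t μ).projectionOnto _ (hcompl μ)) z) = 0
    rw [h1]
    rfl
  have hPsum : ∀ z : Fin n → ℂ, ∑ μ ∈ σ, Pl μ z = z := by
    intro z
    have hz : z ∈ ⨆ ν, t ν := hTop ▸ Submodule.mem_top
    refine Submodule.iSup_induction t (motive := fun w => ∑ μ ∈ σ, Pl μ w = w) hz ?_ (by simp) ?_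
    · intro ν x hx
      by_cases hν : ν ∈ σ
      · rw [Finset.sum_eq_single ν
          (fun μ _ hμν => hPl_zero μ ν x (fun h => hμν h.symm) hx)
          (fun h => absurd hν h)]
        exact hPl_left ν x hx
      · rw [hσ ν hν, Submodule.mem_bot] at hx
        subst hx
        simp
    · intro x y hx hy
      simp only [map_add, Finset.sum_add_distrib, hx, hy]
  have hPlcomm : ∀ μ (z : Fin n → ℂ), f (Pl μ z) = Pl μ (f z) := by
    intro μ z
    have hz : z ∈ ⨆ ν, t ν := hTop ▸ Submodule.mem_top
    refine Submodule.iSup_induction t (motive := fun w => f (Pl μ w) = Pl μ (f w)) hz ?_ (by simp) ?_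
    · intro ν x hx
      have hfx : f x ∈ t ν :=
        Module.End.mapsTo_maxGenEigenspace_of_comm (Commute.refl f) ν hx
      rcases eq_or_ne ν μ with rfl | hne
      · rw [hPl_left ν x hx, hPl_left ν (f x) hfx]
      · rw [hPl_zero μ ν x hne hx, hPl_zero μ ν (f x) hne hfx, map_zero]
    · intro x y hx hy
      simp only [map_add, hx, hy]
  set Pm : ℂ → Matrix (Fin n) (Fin n) ℂ := fun μ => LinearMap.toMatrix' (Pl μ) with hPmdef
  have hPm : ∀ μ z, (Pm μ).mulVec z = Pl μ z := by
    intro μ z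
    rw [show Pm μ = LinearMap.toMatrix' (Pl μ) from rfl,
      ← Matrix.toLin'_apply, Matrix.toLin'_toMatrix']
  have hPcomm : ∀ μ, A * Pm μ = Pm μ * A := by
    intro μ
    have h1 : f ∘ₗ Pl μ = Pl μ ∘ₗ f := LinearMap.ext fun z => hPlcomm μ z
    have h2 : LinearMap.toMatrix' (f ∘ₗ Pl μ) = A * Pm μ := by
      rw [LinearMap.toMatrix'_comp]
      congr 1
      rw [hf, LinearMap.toMatrix'_toLin']
    have h3 : LinearMap.toMatrix' (Pl μ ∘ₗ f) = Pm μ * A := by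
      rw [LinearMap.toMatrix'_comp]
      congr 1
      rw [hf, LinearMap.toMatrix'_toLin']
    rw [← h2, ← h3, h1]
  set rr : ℂ → ℝ := fun μ => if μ.re < 0 then -μ.re else 1 with hrrdef
  have hrr : ∀ μ, 0 < rr μ := by
    intro μ
    rw [hrrdef]
    dsimp only
    split
    · linarith
    · norm_num
  set HH : ℂ → Matrix (Fin n) (Fin n) ℂ := fun μ => CL.Hmat (A - μ • 1) (rr μ) with hHH
  have hHHherm : ∀ μ, (HH μ)ᴴ = HH μ := fun μ => CL.Hmat_herm _ _
  set X : Matrix (Fin n) (Fin n) ℂ := ∑ μ ∈ σ, (Pm μ)ᴴ * HH μ * Pm μ with hX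
  have hPsumm : ∀ z : Fin n → ℂ, ∑ μ ∈ σ, (Pm μ).mulVec z = z := by
    intro z
    simp only [hPm]
    exact hPsum z
  have hXquad : ∀ z, star z ⬝ᵥ X.mulVec z
      = ∑ μ ∈ σ, star ((Pm μ).mulVec z) ⬝ᵥ (HH μ).mulVec ((Pm μ).mulVec z) := by
    intro z
    rw [hX, CL.sum_mulVec', CL.dotProduct_sum']
    refine Finset.sum_congr rfl fun μ _ => ?_
    rw [Matrix.mul_assoc, CL.key_adj, ← Matrix.mulVec_mulVec]
  -- per-block estimate
  have hblock : ∀ (μ : ℂ) (w : Fin n → ℂ), w ∈ t μ →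
      (star w ⬝ᵥ (Aᴴ * HH μ + HH μ * A).mulVec w).re ≤ 0 := by
    intro μ w hw
    set N : Matrix (Fin n) (Fin n) ℂ := A - μ • 1 with hN
    have hAcT : Aᴴ = (star μ) • (1 : Matrix (Fin n) (Fin n) ℂ) + Nᴴ := by
      rw [hN, Matrix.conjTranspose_sub, Matrix.conjTranspose_smul, Matrix.conjTranspose_one]
      abel
    have hAdec : A = μ • (1 : Matrix (Fin n) (Fin n) ℂ) + N := by rw [hN]; abel
    have hNHH : Nᴴ * HH μ = (HH μ * N)ᴴ := by rw [Matrix.conjTranspose_mul, hHHherm]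
    have hsplit : Aᴴ * HH μ + HH μ * A
        = ((star μ) • HH μ + (HH μ * N)ᴴ) + (μ • HH μ + HH μ * N) := by
      rw [hAcT]
      rw [hAdec]
      rw [Matrix.add_mul, Matrix.mul_add, Matrix.smul_mul, Matrix.one_mul, mul_smul_comm,
        Matrix.mul_one, hNHH]
    set Qc : ℂ := star w ⬝ᵥ (HH μ).mulVec w with hQc
    set Cc : ℂ := star w ⬝ᵥ (HH μ * N).mulVec w with hCc
    have hquad : (star w ⬝ᵥ (Aᴴ * HH μ + HH μ * A).mulVec w).re
        = 2 * μ.re * Qc.re + 2 * Cc.re := by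
      rw [hsplit]
      rw [Matrix.add_mulVec, Matrix.add_mulVec, Matrix.add_mulVec]
      rw [dotProduct_add, dotProduct_add, dotProduct_add]
      rw [Matrix.smul_mulVec, dotProduct_smul, Matrix.smul_mulVec, dotProduct_smul]
      rw [CL.star_quad, ← hCc, ← hQc]
      simp only [smul_eq_mul, Complex.add_re, Complex.mul_re, Complex.star_def,
        Complex.conj_re, Complex.conj_im, Complex.sub_re]
      ring
    rw [hquad]
    rcases lt_trichotomy μ.re 0 with hlt | heq | hgt
    · have hrrμ : rr μ = -μ.re := by rw [hrrdef]; exact if_pos hlt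
      have hest := CL.block_est N (rr μ) (hrr μ) w (hkill μ w hw)
      rw [hrrμ] at hest
      have h5 : HH μ = CL.Hmat N (-μ.re) := by
        simp only [hHH]
        rw [← hN, hrrμ]
      have h6 : Cc.re ≤ (-μ.re) * Qc.re := by
        rw [hCc, hQc, h5]
        exact hest
      linarith
    · have hNw : N.mulVec w = 0 := hsemi' μ heq w hw
      have : Cc = 0 := by
        rw [hCc, ← Matrix.mulVec_mulVec, hNw, Matrix.mulVec_zero, dotProduct_zero]
      rw [this, heq]
      simp
    · have hbot : t μ = ⊥ := by
        by_contra hb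
        exact absurd (hspec' μ hb) (not_le.mpr hgt)
      rw [hbot, Submodule.mem_bot] at hw
      subst hw
      have hQ0 : Qc = 0 := by rw [hQc]; simp
      have hC0 : Cc = 0 := by rw [hCc]; simp
      rw [hQ0, hC0]
      simp
  refine ⟨X, ?_, ?_, ?_⟩
  · rw [hX, Matrix.conjTranspose_sum]
    refine Finset.sum_congr rfl fun μ _ => ?_
    rw [Matrix.conjTranspose_mul, Matrix.conjTranspose_mul, Matrix.conjTranspose_conjTranspose,
      hHHherm μ, Matrix.mul_assoc]
  · intro z hz
    rw [hXquad z, Complex.re_sum]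
    have hex : ∃ μ ∈ σ, (Pm μ).mulVec z ≠ 0 := by
      by_contra h
      push_neg at h
      apply hz
      rw [← hPsumm z]
      exact Finset.sum_eq_zero h
    obtain ⟨μ0, hμ0σ, hμ0⟩ := hex
    have h1 : ∀ μ ∈ σ, (star ((Pm μ).mulVec z) ⬝ᵥ (Pm μ).mulVec z).re
        ≤ (star ((Pm μ).mulVec z) ⬝ᵥ (HH μ).mulVec ((Pm μ).mulVec z)).re :=
      fun μ _ => CL.Hmat_lower _ _ _
    calc (0:ℝ) < (star ((Pm μ0).mulVec z) ⬝ᵥ (Pm μ0).mulVec z).re := CL.dot_self_re_pos hμ0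
      _ ≤ ∑ μ ∈ σ, (star ((Pm μ).mulVec z) ⬝ᵥ (Pm μ).mulVec z).re :=
          Finset.single_le_sum (f := fun μ => (star ((Pm μ).mulVec z) ⬝ᵥ (Pm μ).mulVec z).re)
            (fun μ _ => CL.dot_self_re_nonneg _) hμ0σ
      _ ≤ ∑ μ ∈ σ, (star ((Pm μ).mulVec z) ⬝ᵥ (HH μ).mulVec ((Pm μ).mulVec z)).re :=
          Finset.sum_le_sum h1
  · intro z
    have hsplitX : Aᴴ * X + X * A
        = ∑ μ ∈ σ, ((Pm μ)ᴴ * ((Aᴴ * HH μ + HH μ * A) * Pm μ)) := by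
      rw [hX, Finset.mul_sum, Finset.sum_mul, ← Finset.sum_add_distrib]
      refine Finset.sum_congr rfl fun μ _ => ?_
      have hc := hPcomm μ
      have hcH : Aᴴ * (Pm μ)ᴴ = (Pm μ)ᴴ * Aᴴ := by
        calc Aᴴ * (Pm μ)ᴴ = (Pm μ * A)ᴴ := (Matrix.conjTranspose_mul _ _).symm
          _ = (A * Pm μ)ᴴ := by rw [hc]
          _ = (Pm μ)ᴴ * Aᴴ := Matrix.conjTranspose_mul _ _
      simp only [Matrix.mul_add, Matrix.add_mul, Matrix.mul_assoc]
      rw [← hc]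
      rw [← Matrix.mul_assoc Aᴴ (Pm μ)ᴴ _, hcH, Matrix.mul_assoc]
    rw [hsplitX, CL.sum_mulVec', CL.dotProduct_sum', Complex.re_sum]
    refine Finset.sum_nonpos fun μ _ => ?_
    rw [CL.key_adj, ← Matrix.mulVec_mulVec]
    exact hblock μ _ (by rw [hPm]; exact hPlmem μ z)
end
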